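/- arXiv:math/0703466 — 3 statements merged into one kernel-verified Lean document; each statement's English description precedes it below -/
import Mathlib

section
/- Let f : ℝ² → ℝ² be a differentiable map with f(0) = 0. If Spec(f) ∩ ℝ = ∅ (no Jacobian derivative Df_p has a real eigenvalue), then f is a topological embedding with Fix(f²) = {0}, where f² = f ∘ f. -/
open Topology Filter Metric Set Function

noncomputable section

/-- The plane with the Euclidean norm. -/
abbrev Plane : Type := EuclideanSpace ℝ (Fin 2)

/-- `z : ℂ` is a complex eigenvalue of the continuous `ℝ`-linear map `L : ℝ² → ℝ²`,
i.e. a root of the characteristic polynomial of its matrix in the standard basis. -/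
def IsEigenvalueCLM (L : Plane →L[ℝ] Plane) (z : ℂ) : Prop :=
  (((LinearMap.toMatrix (EuclideanSpace.basisFun (Fin 2) ℝ).toBasis
      (EuclideanSpace.basisFun (Fin 2) ℝ).toBasis) L.toLinearMap).map
      (algebraMap ℝ ℂ)).charpoly.IsRoot z

/-- `Spec` of a map whose derivative at each point `p` is `Df p`: the set of all complex
eigenvalues of all the derivatives. -/
def spec (Df : Plane → Plane →L[ℝ] Plane) : Set ℂ :=
  {z | ∃ p : Plane, IsEigenvalueCLM (Df p) z}

/-! Let `ω(u, w) = u₀ w₁ - u₁ w₀` be the area form. A vector `v ≠ 0` with `ω(v, Df_p v) = 0` is a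
real eigenvector of `Df_p`, so by the mean value theorem applied to `x ↦ ω(b - a, f x)` the
quantity `ω(b - a, f b - f a)` never vanishes for `a ≠ b`. The pairs `a ≠ b` form a connected set,
so it has a constant sign, and replacing `ω` by `-ω` we may take it positive.

Positivity makes `t ↦ ω(u, f(x + t u) - f x)` increasing on `t ≥ 1`. Hence
if `m > 0` is the minimum of `ω(z - x, f z - f x)` on the sphere `‖z - x‖ = ε`, every `y` with
`‖y - x‖ ≥ ε` satisfies `m ≤ ‖ω‖ ε ‖f y - f x‖`, so `f⁻¹` is continuous on the image.

As `ω` is alternating, two fixed points `a ≠ b` would give `ω(b - a, b - a) = 0`, and a point of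
period two with `f p ≠ p` would give `ω(f p - p, p - f p) = 0`. -/

lemma IsPreconnected.forall_pos_or_forall_neg {X : Type*} [TopologicalSpace X] {s : Set X}
    (hs : IsPreconnected s) {φ : X → ℝ} (hφ : ContinuousOn φ s) (hne : ∀ x ∈ s, φ x ≠ 0) :
    (∀ x ∈ s, 0 < φ x) ∨ (∀ x ∈ s, φ x < 0) := by
  by_contra! h
  obtain ⟨⟨x, hx, hφx⟩, y, hy, hφy⟩ := h
  obtain ⟨z, hz, hφz⟩ := hs.intermediate_value hx hy hφ ⟨hφx, hφy⟩
  exact hne z hz hφz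

section BilinearMonotone

variable {E F : Type*} [NormedAddCommGroup E] [NormedSpace ℝ E]
  [NormedAddCommGroup F] [NormedSpace ℝ F] {ω : E →L[ℝ] F →L[ℝ] ℝ} {g : E → F}

lemma apply_sub_ne_zero_of_hasFDerivAt {Dg : E → E →L[ℝ] F}
    (hdiff : ∀ p, HasFDerivAt g (Dg p) p) (hω : ∀ p v, v ≠ 0 → ω v (Dg p v) ≠ 0)
    {a b : E} (hab : a ≠ b) : ω (b - a) (g b - g a) ≠ 0 := by
  obtain ⟨p, -, hp⟩ := domain_mvt (f := fun x => ω (b - a) (g x))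
    (fun p _ => ((ω (b - a)).hasFDerivAt.comp p (hdiff p)).hasFDerivWithinAt)
    convex_univ (mem_univ a) (mem_univ b)
  rw [← map_sub] at hp
  exact hp ▸ hω p _ (sub_ne_zero.2 hab.symm)

lemma forall_pos_or_forall_neg_apply_sub (hrank : 1 < Module.rank ℝ E) (hg : Continuous g)
    (hne : ∀ a b, a ≠ b → ω (b - a) (g b - g a) ≠ 0) :
    (∀ a b, a ≠ b → 0 < ω (b - a) (g b - g a)) ∨ (∀ a b, a ≠ b → 0 < (-ω) (b - a) (g b - g a)) := by
  have hconn : IsPreconnected (univ ×ˢ {0}ᶜ : Set (E × E)) :=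
    isPreconnected_univ.prod (isConnected_compl_singleton_of_one_lt_rank hrank 0).isPreconnected
  have hcont : Continuous fun q : E × E => ω q.2 (g (q.1 + q.2) - g q.1) := by fun_prop
  have key : ∀ a b : E, a ≠ b → (a, b - a) ∈ (univ ×ˢ {0}ᶜ : Set (E × E)) ∧ a + (b - a) = b :=
    fun a b hab => ⟨⟨mem_univ a, sub_ne_zero.2 hab.symm⟩, add_sub_cancel a b⟩
  have hne' : ∀ q ∈ (univ ×ˢ {0}ᶜ : Set (E × E)), ω q.2 (g (q.1 + q.2) - g q.1) ≠ 0 := by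
    rintro ⟨a, v⟩ ⟨-, hv⟩
    simpa using hne a (a + v) (by simpa using hv)
  rcases hconn.forall_pos_or_forall_neg hcont.continuousOn hne' with h | h
  · refine .inl fun a b hab => ?_
    simpa only [(key a b hab).2] using h _ (key a b hab).1
  · refine .inr fun a b hab => ?_
    simpa only [(key a b hab).2, neg_apply, neg_pos] using h _ (key a b hab).1

variable (hmono : ∀ a b, a ≠ b → 0 < ω (b - a) (g b - g a))
include hmono

lemma apply_sub_le_apply_sub_smul (x u : E) {t : ℝ} (ht : 1 ≤ t) :
    ω u (g (x + u) - g x) ≤ ω u (g (x + t • u) - g x) := by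
  rcases eq_or_ne u 0 with rfl | hu
  · simp
  rcases ht.eq_or_lt with rfl | ht
  · simp
  have hdiff : x + t • u - (x + u) = (t - 1) • u := by rw [sub_smul, one_smul]; abel
  have hne : x + u ≠ x + t • u := fun h => by
    rw [h, sub_self, eq_comm, smul_eq_zero, sub_eq_zero] at hdiff
    exact hdiff.elim ht.ne' hu
  have hpos := hmono (x + u) (x + t • u) hne
  rw [hdiff, map_smul, smul_apply, smul_eq_mul] at hpos
  have : 0 < ω u (g (x + t • u) - g (x + u)) := pos_of_mul_pos_right hpos (by linarith)
  have hsplit : g (x + t • u) - g x = (g (x + t • u) - g (x + u)) + (g (x + u) - g x) := by abel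
  rw [hsplit, map_add]
  linarith

lemma exists_pos_le_norm_sub_of_le_norm_sub [ProperSpace E] (hg : Continuous g) (x : E)
    {ε : ℝ} (hε : 0 < ε) : ∃ δ > 0, ∀ y, ε ≤ ‖y - x‖ → δ ≤ ‖g y - g x‖ := by
  obtain ⟨m, hm, hmin⟩ := (isCompact_sphere x ε).exists_forall_le'
    (f := fun z => ω (z - x) (g z - g x)) (by fun_prop) fun z hz =>
      hmono x z fun h => hε.ne (by simpa [← h] using hz)
  refine ⟨m / (‖ω‖ * ε + 1), by positivity, fun y hy => ?_⟩
  have hr : 0 < ‖y - x‖ := hε.trans_le hy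
  set u := (ε / ‖y - x‖) • (y - x) with hu
  have hnorm : ‖u‖ = ε := by
    rw [hu, norm_smul, Real.norm_of_nonneg (by positivity), div_mul_cancel₀ _ hr.ne']
  have hy' : x + (‖y - x‖ / ε) • u = y := by
    rw [hu, smul_smul, div_mul_div_cancel₀ hε.ne', div_self hr.ne', one_smul, add_sub_cancel]
  have hbound : m ≤ ‖ω‖ * ε * ‖g y - g x‖ :=
    calc m ≤ ω u (g (x + u) - g x) := by simpa using hmin (x + u) (by simpa using hnorm)
      _ ≤ ω u (g y - g x) := by
          simpa only [hy'] using apply_sub_le_apply_sub_smul hmono x u ((one_le_div hε).2 hy)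
      _ ≤ ‖ω u (g y - g x)‖ := le_abs_self _
      _ ≤ ‖ω‖ * ‖u‖ * ‖g y - g x‖ := ω.le_opNorm₂ u _
      _ = ‖ω‖ * ε * ‖g y - g x‖ := by rw [hnorm]
  rw [div_le_iff₀ (by positivity)]
  nlinarith [norm_nonneg (g y - g x)]

theorem isEmbedding_of_pos_apply_sub [ProperSpace E] (hg : Continuous g) : IsEmbedding g := by
  refine ⟨isInducing_iff_nhds.2 fun x => le_antisymm (hg.tendsto x).le_comap ?_, fun a b hab => ?_⟩
  · rw [(nhds_basis_ball.comap g).le_basis_iff nhds_basis_ball]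
    intro ε hε
    obtain ⟨δ, hδ, hfar⟩ := exists_pos_le_norm_sub_of_le_norm_sub hmono hg x hε
    refine ⟨δ, hδ, fun y hy => ?_⟩
    rw [mem_preimage, mem_ball, dist_eq_norm] at hy
    rw [mem_ball, dist_eq_norm]
    by_contra! h
    exact (hfar y h).not_gt hy
  · by_contra hne
    simpa [hab] using hmono a b hne
end BilinearMonotone

section FixedPoints

variable {E : Type*} [AddCommGroup E] [Module ℝ E] [TopologicalSpace E]
  {ω : E →L[ℝ] E →L[ℝ] ℝ} {g : E → E}
  (halt : ∀ u, ω u u = 0) (hne : ∀ a b, a ≠ b → ω (b - a) (g b - g a) ≠ 0)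
include halt hne

lemma eq_of_isFixedPt {a b : E} (ha : IsFixedPt g a) (hb : IsFixedPt g b) : a = b := by
  by_contra hab
  exact hne a b hab (by rw [ha.eq, hb.eq, halt])

lemma isFixedPt_of_isFixedPt_iterate_two {p : E} (hp : IsFixedPt g^[2] p) : IsFixedPt g p := by
  by_contra hgp
  apply hne p (g p) (Ne.symm hgp)
  rw [show g (g p) = p from hp, ← neg_sub (g p) p, map_neg, halt, neg_zero]

end FixedPoints

def areaForm : Plane →L[ℝ] Plane →L[ℝ] ℝ :=
  (ContinuousLinearMap.mul ℝ ℝ).bilinearComp (EuclideanSpace.proj 0) (EuclideanSpace.proj 1) -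
    (ContinuousLinearMap.mul ℝ ℝ).bilinearComp (EuclideanSpace.proj 1) (EuclideanSpace.proj 0)

@[simp]
lemma areaForm_apply (u w : Plane) : areaForm u w = u 0 * w 1 - u 1 * w 0 := rfl

lemma areaForm_self (u : Plane) : areaForm u u = 0 := by
  simp [mul_comm]

lemma exists_eq_smul_of_areaForm_eq_zero {v w : Plane} (hv : v ≠ 0) (h : areaForm v w = 0) :
    ∃ t : ℝ, w = t • v := by
  rw [areaForm_apply] at h
  have hv' : v 0 ≠ 0 ∨ v 1 ≠ 0 := by
    by_contra! hc
    exact hv (by ext i; fin_cases i <;> simp [hc.1, hc.2])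
  rcases hv' with h0 | h1
  · refine ⟨w 0 / v 0, ?_⟩
    ext i; fin_cases i <;> simp <;> field_simp; linarith
  · refine ⟨w 1 / v 1, ?_⟩
    ext i; fin_cases i <;> simp <;> field_simp; linarith

lemma isEigenvalueCLM_ofReal_iff (L : Plane →L[ℝ] Plane) (t : ℝ) :
    IsEigenvalueCLM L t ↔ Module.End.HasEigenvalue (L : Plane →ₗ[ℝ] Plane) t := by
  rw [IsEigenvalueCLM, Matrix.charpoly_map, LinearMap.charpoly_toMatrix,
    Module.End.hasEigenvalue_iff_isRoot_charpoly, Polynomial.IsRoot, Polynomial.IsRoot,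
    Polynomial.eval_map, ← Complex.coe_algebraMap, Polynomial.eval₂_at_apply, map_eq_zero]

lemma areaForm_apply_ne_zero_of_not_isEigenvalueCLM {L : Plane →L[ℝ] Plane}
    (hL : ∀ t : ℝ, ¬ IsEigenvalueCLM L t) {v : Plane} (hv : v ≠ 0) : areaForm v (L v) ≠ 0 := by
  intro h
  obtain ⟨t, ht⟩ := exists_eq_smul_of_areaForm_eq_zero hv h
  exact hL t ((isEigenvalueCLM_ofReal_iff L t).2 <| Module.End.hasEigenvalue_of_hasEigenvector
    ⟨Module.End.mem_eigenspace_iff.2 ht, hv⟩)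

lemma one_lt_rank_plane : 1 < Module.rank ℝ Plane := by
  rw [← Module.finrank_eq_rank, finrank_euclideanSpace_fin]
  norm_num

/-- A differentiable map of the plane fixing the origin with no real eigenvalue of any
derivative is a topological embedding with `Fix(f²) = {0}`. -/
theorem stmt11 (f : Plane → Plane) (Df : Plane → Plane →L[ℝ] Plane)
    (hdiff : ∀ p : Plane, HasFDerivAt f (Df p) p)
    (h0 : f 0 = 0)
    (hspec : spec Df ∩ Set.range (Complex.ofReal) = ∅) :
    Topology.IsEmbedding f ∧ {p : Plane | f (f p) = p} = {0} := by
  have hreal : ∀ p (t : ℝ), ¬ IsEigenvalueCLM (Df p) t := fun p t ht =>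
    hspec.subset ⟨⟨p, ht⟩, t, rfl⟩
  have hne : ∀ a b, a ≠ b → areaForm (b - a) (f b - f a) ≠ 0 :=
    fun a b => apply_sub_ne_zero_of_hasFDerivAt hdiff
      fun p _ hv => areaForm_apply_ne_zero_of_not_isEigenvalueCLM (hreal p) hv
  have hcont : Continuous f := continuous_iff_continuousAt.2 fun p => (hdiff p).continuousAt
  refine ⟨?_, ?_⟩
  · rcases forall_pos_or_forall_neg_apply_sub one_lt_rank_plane hcont hne with hpos | hpos
    exacts [isEmbedding_of_pos_apply_sub hpos hcont, isEmbedding_of_pos_apply_sub hpos hcont]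
  · ext p
    refine ⟨fun hp => eq_of_isFixedPt areaForm_self hne
      (isFixedPt_of_isFixedPt_iterate_two areaForm_self hne hp) h0, ?_⟩
    rintro rfl
    simp [h0]
end
end

section
/- Let f : ℝⁿ → ℝⁿ be a C¹ map with f(0) = 0. Suppose there exist R > 0 and 0 < α < 1 such that ‖Df_p · p‖ < α‖p‖ for every p with ‖p‖ > R. Then there exist S₀ > R and μ with α < μ < 1 such that for every p ∈ ℝⁿ with ‖p‖ ≥ S₀ one has ‖f(p)‖ ≤ μ‖p‖. -/
open Metric Set Function

/-! Along the ray `t ↦ t • p` the velocity of `f` is `Df_{tp} p = t⁻¹ Df_{tp} (tp)`, so the radial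
hypothesis bounds it by `α ‖p‖` outside the ball of radius `R`. The mean value inequality from the
sphere of radius `r > R` to `p` then gives `‖f p‖ ≤ α (‖p‖ - r) + M`, where `M` bounds `f` on that
compact sphere; for large `‖p‖` the constant `M` is absorbed by any slope `μ ∈ (α, 1)`. -/

section RadialMeanValue

variable {E F : Type*} [NormedAddCommGroup E] [NormedSpace ℝ E]
  [NormedAddCommGroup F] [NormedSpace ℝ F]

theorem norm_fderiv_smul_apply_le {f : E → F} {α r : ℝ}
    (hbound : ∀ x : E, r ≤ ‖x‖ → ‖fderiv ℝ f x x‖ ≤ α * ‖x‖) {p : E} {t : ℝ} (ht : 0 < t)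
    (htp : r ≤ t * ‖p‖) :
    ‖fderiv ℝ f (t • p) p‖ ≤ α * ‖p‖ := by
  have hnorm : ‖t • p‖ = t * ‖p‖ := by rw [norm_smul, Real.norm_of_nonneg ht.le]
  have h := hbound (t • p) (hnorm ▸ htp)
  rw [map_smul, norm_smul, Real.norm_of_nonneg ht.le, hnorm, mul_left_comm] at h
  exact le_of_mul_le_mul_left h ht

theorem norm_sub_smul_le_of_norm_fderiv_apply_self_le {f : E → F} (hf : Differentiable ℝ f)
    {α r : ℝ} (hr : 0 < r) (hbound : ∀ x : E, r ≤ ‖x‖ → ‖fderiv ℝ f x x‖ ≤ α * ‖x‖)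
    {p : E} (hp : r ≤ ‖p‖) :
    ‖f p - f ((r / ‖p‖) • p)‖ ≤ α * (‖p‖ - r) := by
  have hp0 : 0 < ‖p‖ := hr.trans_le hp
  set s := r / ‖p‖ with hs
  have hs0 : 0 < s := div_pos hr hp0
  have hs1 : s ≤ 1 := (div_le_one hp0).2 hp
  have hsp : s * ‖p‖ = r := div_mul_cancel₀ r hp0.ne'
  have hray : ∀ t ∈ Icc s 1, ‖f (t • p) - f (s • p)‖ ≤ α * ‖p‖ * (t - s) := by
    refine norm_image_sub_le_of_norm_deriv_le_segment' (f' := fun t ↦ fderiv ℝ f (t • p) p)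
      (fun t _ ↦ ?_) (fun t ht ↦ ?_)
    · simpa [comp_def] using ((hf (t • p)).hasFDerivAt.comp_hasDerivAt t
        ((hasDerivAt_id t).smul_const p)).hasDerivWithinAt
    · exact norm_fderiv_smul_apply_le hbound (hs0.trans_le ht.1)
        (hsp ▸ mul_le_mul_of_nonneg_right ht.1 hp0.le)
  calc ‖f p - f (s • p)‖ = ‖f ((1 : ℝ) • p) - f (s • p)‖ := by rw [one_smul]
    _ ≤ α * ‖p‖ * (1 - s) := hray 1 ⟨hs1, le_rfl⟩
    _ = α * (‖p‖ - r) := by rw [← hsp]; ring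

theorem norm_le_of_norm_fderiv_apply_self_le {f : E → F} (hf : Differentiable ℝ f)
    {α r M : ℝ} (hr : 0 < r) (hbound : ∀ x : E, r ≤ ‖x‖ → ‖fderiv ℝ f x x‖ ≤ α * ‖x‖)
    (hM : ∀ x ∈ sphere (0 : E) r, ‖f x‖ ≤ M) {p : E} (hp : r ≤ ‖p‖) :
    ‖f p‖ ≤ α * (‖p‖ - r) + M := by
  have hp0 : 0 < ‖p‖ := hr.trans_le hp
  have hsphere : (r / ‖p‖) • p ∈ sphere (0 : E) r := by
    rw [mem_sphere_zero_iff_norm, norm_smul, Real.norm_of_nonneg (div_pos hr hp0).le,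
      div_mul_cancel₀ r hp0.ne']
  calc ‖f p‖ ≤ ‖f p - f ((r / ‖p‖) • p)‖ + ‖f ((r / ‖p‖) • p)‖ := norm_le_norm_sub_add _ _
    _ ≤ α * (‖p‖ - r) + M :=
      add_le_add (norm_sub_smul_le_of_norm_fderiv_apply_self_le hf hr hbound hp) (hM _ hsphere)

end RadialMeanValue

theorem stmt16_general (n : ℕ)
    (f : EuclideanSpace ℝ (Fin n) → EuclideanSpace ℝ (Fin n))
    (hC1 : ContDiff ℝ 1 f)
    (R α : ℝ) (hR : 0 < R) (hα0 : 0 < α) (hα1 : α < 1)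
    (hcontr : ∀ p : EuclideanSpace ℝ (Fin n), R < ‖p‖ → ‖fderiv ℝ f p p‖ < α * ‖p‖) :
    ∃ S₀ : ℝ, R < S₀ ∧ ∃ μ : ℝ, α < μ ∧ μ < 1 ∧
      ∀ p : EuclideanSpace ℝ (Fin n), S₀ ≤ ‖p‖ → ‖f p‖ ≤ μ * ‖p‖ := by
  obtain ⟨M, hM⟩ := IsCompact.exists_bound_of_continuousOn
    (isCompact_sphere (0 : EuclideanSpace ℝ (Fin n)) (R + 1)) hC1.continuous.continuousOn
  have hbound : ∀ x, R + 1 ≤ ‖x‖ → ‖fderiv ℝ f x x‖ ≤ α * ‖x‖ :=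
    fun x hx ↦ (hcontr x (by linarith)).le
  refine ⟨max (R + 1) (2 * M / (1 - α)), by simp, (1 + α) / 2, by linarith, by linarith,
    fun p hp ↦ ?_⟩
  have hpr : R + 1 ≤ ‖p‖ := le_of_max_le_left hp
  have hMp : 2 * M ≤ (1 - α) * ‖p‖ := by
    have := le_of_max_le_right hp
    rw [div_le_iff₀ (by linarith)] at this
    linarith
  have hfp := norm_le_of_norm_fderiv_apply_self_le (hC1.differentiable one_ne_zero)
    (by linarith) hbound hM hpr
  linarith [mul_pos hα0 (by linarith : 0 < R + 1)]

/-- If `f : ℝⁿ → ℝⁿ` is `C¹` with `f 0 = 0` and `‖Df_p · p‖ < α ‖p‖` for `‖p‖ > R`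
(with `0 < α < 1`), then there are `S₀ > R` and `α < μ < 1` such that `‖f p‖ ≤ μ ‖p‖`
whenever `‖p‖ ≥ S₀`. -/
theorem stmt16 (n : ℕ)
    (f : EuclideanSpace ℝ (Fin n) → EuclideanSpace ℝ (Fin n))
    (hC1 : ContDiff ℝ 1 f)
    (h0 : f 0 = 0)
    (R α : ℝ) (hR : 0 < R) (hα0 : 0 < α) (hα1 : α < 1)
    (hcontr : ∀ p : EuclideanSpace ℝ (Fin n), R < ‖p‖ → ‖fderiv ℝ f p p‖ < α * ‖p‖) :
    ∃ S₀ : ℝ, R < S₀ ∧ ∃ μ : ℝ, α < μ ∧ μ < 1 ∧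
      ∀ p : EuclideanSpace ℝ (Fin n), S₀ ≤ ‖p‖ → ‖f p‖ ≤ μ * ‖p‖ :=
  stmt16_general n f hC1 R α hR hα0 hα1 hcontr
end

section
/- Let C > 0 and let 𝒜 be the set of 2×2 real matrices A with ‖A‖ ≤ C and sr(A) ≤ 0.9. Then there exists ε with 0 < ε < 1/(8C) such that: for every 2×2 real matrix B = bI + E, where 1/(2C) ≤ b ≤ 1 and every entry of E has absolute value less than ε, and for every A ∈ 𝒜, one has sr(BA) ≤ 0.95. -/
open Topology Filter Metric Set Function

noncomputable section

/-- `z : ℂ` is a complex eigenvalue of the `2 × 2` real matrix `A`. -/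
def IsMatrixEigenvalue (A : Matrix (Fin 2) (Fin 2) ℝ) (z : ℂ) : Prop :=
  ((A.map (algebraMap ℝ ℂ)).charpoly).IsRoot z

/-- The operator norm of a `2 × 2` real matrix with respect to the Euclidean norm. -/
def matrixOpNorm (A : Matrix (Fin 2) (Fin 2) ℝ) : ℝ :=
  ‖LinearMap.toContinuousLinearMap (Matrix.toEuclideanLin A)‖

/-! Write `B = b • 1 + E` and let `l₁, l₂` be the eigenvalues of `A`. Any eigenvalue `z` of `BA`
satisfies `(z - b l₁)(z - b l₂) = tr(EA) z - (det B - b²) det A`, whose right side is `O(ε C |z| + ε)`.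
Since `|b lᵢ| ≤ 0.9`, the left side is at least `(|z| - 0.9)²` once `|z| > 0.9`, which forces
`|z| ≤ 0.95` for `ε` small compared with `1 / C`. -/

open Matrix in
lemma isMatrixEigenvalue_iff (M : Matrix (Fin 2) (Fin 2) ℝ) (z : ℂ) :
    IsMatrixEigenvalue M z ↔ z ^ 2 - M.trace * z + M.det = 0 := by
  simp [IsMatrixEigenvalue, charpoly_fin_two, trace_fin_two, det_fin_two]

lemma exists_isMatrixEigenvalue_add_eq_trace_mul_eq_det (A : Matrix (Fin 2) (Fin 2) ℝ) :
    ∃ l₁ l₂ : ℂ, IsMatrixEigenvalue A l₁ ∧ IsMatrixEigenvalue A l₂ ∧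
      l₁ + l₂ = A.trace ∧ l₁ * l₂ = A.det := by
  obtain ⟨w, hw⟩ := IsAlgClosed.exists_pow_nat_eq ((A.trace : ℂ) ^ 2 - 4 * A.det) two_pos
  refine ⟨(A.trace + w) / 2, (A.trace - w) / 2, ?_, ?_, by ring, by linear_combination -hw / 4⟩ <;>
    rw [isMatrixEigenvalue_iff] <;> linear_combination hw / 4

lemma abs_det_le_of_isMatrixEigenvalue_norm_le {A : Matrix (Fin 2) (Fin 2) ℝ} {ρ : ℝ}
    (hA : ∀ z, IsMatrixEigenvalue A z → ‖z‖ ≤ ρ) : |A.det| ≤ ρ ^ 2 := by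
  obtain ⟨l₁, l₂, h₁, h₂, -, hprod⟩ := exists_isMatrixEigenvalue_add_eq_trace_mul_eq_det A
  rw [← Real.norm_eq_abs, ← Complex.norm_real, ← hprod, norm_mul, sq]
  exact mul_le_mul (hA _ h₁) (hA _ h₂) (norm_nonneg _) ((norm_nonneg _).trans (hA _ h₁))

lemma abs_apply_le_norm_toEuclideanLin {m n : Type*} [Fintype m] [Fintype n] [DecidableEq n]
    (A : Matrix m n ℝ) (i : m) (j : n) :
    |A i j| ≤ ‖LinearMap.toContinuousLinearMap (Matrix.toEuclideanLin A)‖ := by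
  set f := LinearMap.toContinuousLinearMap (Matrix.toEuclideanLin A)
  have hf : f (EuclideanSpace.single j 1) i = A i j := by
    simp [f, Matrix.mulVec_single]
  calc |A i j| = ‖f (EuclideanSpace.single j 1) i‖ := by rw [hf, Real.norm_eq_abs]
    _ ≤ ‖f (EuclideanSpace.single j 1)‖ := PiLp.norm_apply_le _ _
    _ ≤ ‖f‖ * ‖EuclideanSpace.single j (1 : ℝ)‖ := f.le_opNorm _
    _ = ‖f‖ := by simp

lemma abs_trace_mul_le {m n : Type*} [Fintype m] [Fintype n] {E : Matrix m n ℝ}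
    {A : Matrix n m ℝ} {ε c : ℝ} (hE : ∀ i j, |E i j| ≤ ε) (hA : ∀ i j, |A i j| ≤ c) :
    |(E * A).trace| ≤ Fintype.card m * Fintype.card n * (ε * c) := by
  calc |(E * A).trace| ≤ ∑ i, ∑ j, |E i j * A j i| := by
        simp only [Matrix.trace, Matrix.diag, Matrix.mul_apply]
        exact (Finset.abs_sum_le_sum_abs _ _).trans
          (Finset.sum_le_sum fun i _ => Finset.abs_sum_le_sum_abs _ _)
    _ ≤ ∑ i : m, ∑ j : n, ε * c := by
        gcongr with i _ j _
        rw [abs_mul]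
        exact mul_le_mul (hE i j) (hA j i) (abs_nonneg _) ((abs_nonneg _).trans (hE i j))
    _ = _ := by simp [mul_assoc]

lemma abs_det_smul_one_add_sub_sq_le {b ε : ℝ} {E : Matrix (Fin 2) (Fin 2) ℝ}
    (hE : ∀ i j, |E i j| ≤ ε) :
    |(b • (1 : Matrix (Fin 2) (Fin 2) ℝ) + E).det - b ^ 2| ≤ 2 * |b| * ε + 2 * ε ^ 2 := by
  have hdet : (b • (1 : Matrix (Fin 2) (Fin 2) ℝ) + E).det - b ^ 2
      = b * (E 0 0 + E 1 1) + (E 0 0 * E 1 1 - E 0 1 * E 1 0) := by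
    simp [Matrix.det_fin_two]; ring
  have hε : 0 ≤ ε := (abs_nonneg _).trans (hE 0 0)
  have hprod : ∀ i j k l, |E i j * E k l| ≤ ε ^ 2 := fun i j k l => by
    rw [abs_mul, sq]; exact mul_le_mul (hE i j) (hE k l) (abs_nonneg _) hε
  rw [hdet]
  calc _ ≤ |b| * (|E 0 0| + |E 1 1|) + (|E 0 0 * E 1 1| + |E 0 1 * E 1 0|) := by
        grw [abs_add_le, abs_mul, abs_add_le, abs_sub]
    _ ≤ |b| * (ε + ε) + (ε ^ 2 + ε ^ 2) := by
        gcongr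
        exacts [hE 0 0, hE 1 1, hprod 0 0 1 1, hprod 0 1 1 0]
    _ = _ := by ring

lemma norm_le_of_norm_sub_mul_sub_le {𝕜 : Type*} [NormedDivisionRing 𝕜] {z μ₁ μ₂ : 𝕜}
    {ρ σ α β : ℝ} (h₁ : ‖μ₁‖ ≤ ρ) (h₂ : ‖μ₂‖ ≤ ρ) (hρσ : ρ ≤ σ) (hα : α ≤ 2 * (σ - ρ))
    (hσ : α * σ + β ≤ (σ - ρ) ^ 2) (h : ‖(z - μ₁) * (z - μ₂)‖ ≤ α * ‖z‖ + β) : ‖z‖ ≤ σ := by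
  by_contra! hz
  have k₁ : ‖z‖ - ρ ≤ ‖z - μ₁‖ := by linarith [norm_sub_norm_le z μ₁]
  have k₂ : ‖z‖ - ρ ≤ ‖z - μ₂‖ := by linarith [norm_sub_norm_le z μ₂]
  have : (‖z‖ - ρ) ^ 2 ≤ α * ‖z‖ + β := by
    rw [norm_mul] at h
    nlinarith [mul_le_mul k₁ k₂ (by linarith) (norm_nonneg _)]
  -- `(r - ρ)² - α r - β` is increasing for `r ≥ σ` and nonnegative at `σ`
  nlinarith [mul_pos (sub_pos.2 hz) (show 0 < ‖z‖ + σ - 2 * ρ - α by linarith)]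

lemma sub_mul_sub_eq_of_isMatrixEigenvalue_smul_one_add_mul {b : ℝ}
    {E A : Matrix (Fin 2) (Fin 2) ℝ} {z l₁ l₂ : ℂ}
    (hz : IsMatrixEigenvalue ((b • (1 : Matrix (Fin 2) (Fin 2) ℝ) + E) * A) z)
    (hsum : l₁ + l₂ = A.trace) (hprod : l₁ * l₂ = A.det) :
    (z - b * l₁) * (z - b * l₂) =
      (E * A).trace * z - (((b • (1 : Matrix (Fin 2) (Fin 2) ℝ) + E).det - b ^ 2) * A.det : ℝ) := by
  rw [isMatrixEigenvalue_iff, Matrix.det_mul, add_mul, Matrix.trace_add, Matrix.smul_mul,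
    one_mul, Matrix.trace_smul, smul_eq_mul] at hz
  push_cast at hz ⊢
  linear_combination hz - b * z * hsum + b ^ 2 * hprod

/-- Given `C > 0`, there exists `0 < ε < 1/(8C)` such that for every matrix
`B = b I + E` with `1/(2C) ≤ b ≤ 1` and all entries of `E` of absolute value `< ε`,
and every `A` with `‖A‖ ≤ C` and `sr(A) ≤ 0.9`, one has `sr(BA) ≤ 0.95`. -/
theorem stmt17 (C : ℝ) (hC : 0 < C) :
    ∃ ε : ℝ, 0 < ε ∧ ε < 1 / (8 * C) ∧
      ∀ (b : ℝ) (E : Matrix (Fin 2) (Fin 2) ℝ),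
        1 / (2 * C) ≤ b → b ≤ 1 → (∀ i j, |E i j| < ε) →
        ∀ A : Matrix (Fin 2) (Fin 2) ℝ,
          matrixOpNorm A ≤ C →
          (∀ z : ℂ, IsMatrixEigenvalue A z → ‖z‖ ≤ 0.9) →
          ∀ z : ℂ,
            IsMatrixEigenvalue ((b • (1 : Matrix (Fin 2) (Fin 2) ℝ) + E) * A) z →
            ‖z‖ ≤ 0.95 := by
  refine ⟨1 / (4000 * (C + 1)), by positivity, ?_, ?_⟩
  · rw [div_lt_div_iff₀ (by positivity) (by positivity)]; linarith
  intro b E hb₁ hb₂ hE A hA hAeig z hz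
  set ε := 1 / (4000 * (C + 1))
  have hε : ε ≤ 1 / 4000 := by
    rw [div_le_div_iff₀ (by positivity) (by norm_num)]; linarith
  have hεC : ε * C ≤ 1 / 4000 := by
    rw [div_mul_eq_mul_div, div_le_div_iff₀ (by positivity) (by norm_num)]; linarith
  have hb : |b| ≤ 1 := abs_le.2 ⟨by linarith [one_div_pos.2 (mul_pos two_pos hC)], hb₂⟩
  have hE' : ∀ i j, |E i j| ≤ ε := fun i j => (hE i j).le
  have hμ : ∀ l : ℂ, IsMatrixEigenvalue A l → ‖(b : ℂ) * l‖ ≤ 0.9 := fun l hl => by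
    rw [norm_mul, Complex.norm_real, Real.norm_eq_abs]
    nlinarith [hAeig l hl, norm_nonneg l, abs_nonneg b]
  obtain ⟨l₁, l₂, h₁, h₂, hsum, hprod⟩ := exists_isMatrixEigenvalue_add_eq_trace_mul_eq_det A
  have htr := abs_trace_mul_le hE' fun i j =>
    (abs_apply_le_norm_toEuclideanLin A i j).trans hA
  have hdetB := abs_det_smul_one_add_sub_sq_le (b := b) hE'
  have hdetA := abs_det_le_of_isMatrixEigenvalue_norm_le hAeig
  refine norm_le_of_norm_sub_mul_sub_le (hμ _ h₁) (hμ _ h₂) (α := 4 * (ε * C))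
    (β := (2 * ε + 2 * ε ^ 2) * 0.9 ^ 2) (by norm_num) (by norm_num; linarith)
    (by norm_num; nlinarith [(by positivity : 0 < ε)]) ?_
  rw [sub_mul_sub_eq_of_isMatrixEigenvalue_smul_one_add_mul hz hsum hprod]
  grw [norm_sub_le, norm_mul, Complex.norm_real, Complex.norm_real, Real.norm_eq_abs,
    Real.norm_eq_abs, abs_mul, htr, hdetB, hdetA, hb]
  norm_num
end
end
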